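/- (Rate-distortion comparison for deterministic feature maps) Let X be a finite-valued random variable, g : A → B and h : B → C functions with f = h ∘ g, and let d : C × C → ℝ≥0 be a distortion measure. Define R_X(D) = min over conditional distributions p(x̂|x) with E[d(f(X), f(X̂))] ≤ D of I(X; X̂), and R_Y(D) = min over conditional distributions p(ŷ|y) (where Y = g(X)) with E[d(h(Y), h(Ŷ))] ≤ D of I(Y; Ŷ). Then for every D ≥ 0 for which the sets are nonempty, R_Y(D) ≤ R_X(D). -/

import Mathlib

open Real

/-- Entropy-based mutual information of a finite joint distribution `j` on `A × B`. -/
noncomputable def jointMI {A B : Type*} [Fintype A] [Fintype B] (j : A → B → ℝ) : ℝ :=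
  (∑ a : A, Real.negMulLog (∑ b : B, j a b)) +
    (∑ b : B, Real.negMulLog (∑ a : A, j a b)) -
      ∑ a : A, ∑ b : B, Real.negMulLog (j a b)

/-- `p` is a probability distribution on the finite type `A`. -/
def IsDist {A : Type*} [Fintype A] (p : A → ℝ) : Prop :=
  (∀ a, 0 ≤ p a) ∧ ∑ a : A, p a = 1

/-- `k` is a Markov kernel (a conditional distribution) from `A` to `B`. -/
def IsKernel {A B : Type*} [Fintype B] (k : A → B → ℝ) : Prop :=
  (∀ a b, 0 ≤ k a b) ∧ ∀ a, ∑ b : B, k a b = 1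

/-!
A quantizer `k` of `X` induces the joint law of `(g X, g X̂)`, which disintegrates as
`q y * k' y y'` for a kernel `k'`. Since the distortion of `X̂` depends on `(X, X̂)` only through
`(g X, g X̂)`, the kernel `k'` quantizes `Y` with the same distortion, and its rate is at most that
of `k` by the data processing inequality for the deterministic map `g × g`. That inequality
follows from writing mutual information as the divergence of the joint law from the product of
its marginals and applying the log-sum inequality on each fiber of `g × g`.
-/

open Finset

-- `x * log (x / y)` without the division; as `log 0 = 0`, it is meaningless for `y = 0 < x`,
-- whence the support hypotheses below.
noncomputable def klTerm (x y : ℝ) : ℝ := x * log x - x * log y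

@[simp]
lemma klTerm_zero_left (y : ℝ) : klTerm 0 y = 0 := by simp [klTerm]

lemma klTerm_mul_of_le {x y z : ℝ} (hx : 0 ≤ x) (hxy : x ≤ y) (hxz : x ≤ z) :
    klTerm x (y * z) = x * log x - x * log y - x * log z := by
  rcases hx.eq_or_lt with rfl | hx
  · simp
  · rw [klTerm, log_mul (by linarith) (by linarith)]
    ring

-- `log t ≤ t - 1` at `t = c y / x`
lemma le_klTerm {x y c : ℝ} (hx : 0 ≤ x) (hy : 0 ≤ y) (hxy : y = 0 → x = 0) (hc : 0 < c) :
    x * log c + x - c * y ≤ klTerm x y := by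
  rcases hx.eq_or_lt with rfl | hx
  · simp only [zero_mul, add_zero, zero_sub, klTerm_zero_left, neg_nonpos]
    positivity
  have hy : 0 < y := hy.lt_of_ne fun h => hx.ne' (hxy h.symm)
  have hlog := log_le_sub_one_of_pos (show 0 < c * y / x by positivity)
  rw [log_div (by positivity) hx.ne', log_mul hc.ne' hy.ne'] at hlog
  have := mul_le_mul_of_nonneg_left hlog hx.le
  rw [klTerm]
  field_simp at this
  linarith

/-- The log-sum inequality. -/
lemma klTerm_sum_le_sum_klTerm {ι : Type*} (s : Finset ι) {x y : ι → ℝ}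
    (hx : ∀ i ∈ s, 0 ≤ x i) (hy : ∀ i ∈ s, 0 ≤ y i) (hxy : ∀ i ∈ s, y i = 0 → x i = 0) :
    klTerm (∑ i ∈ s, x i) (∑ i ∈ s, y i) ≤ ∑ i ∈ s, klTerm (x i) (y i) := by
  set X := ∑ i ∈ s, x i
  set Y := ∑ i ∈ s, y i
  rcases (sum_nonneg hx).eq_or_lt with hX | hX
  · have hx0 : ∀ i ∈ s, x i = 0 := (sum_eq_zero_iff_of_nonneg hx).1 hX.symm
    rw [show X = 0 from hX.symm, klTerm_zero_left]
    exact sum_nonneg fun i hi => by rw [hx0 i hi, klTerm_zero_left]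
  have hY : 0 < Y := (sum_nonneg hy).lt_of_ne fun hY => hX.ne' <| sum_eq_zero fun i hi =>
    hxy i hi ((sum_eq_zero_iff_of_nonneg hy).1 hY.symm i hi)
  calc klTerm X Y = ∑ i ∈ s, (x i * log (X / Y) + x i - X / Y * y i) := by
        rw [sum_sub_distrib, sum_add_distrib, ← sum_mul, ← mul_sum, log_div hX.ne' hY.ne',
          div_mul_cancel₀ _ hY.ne', klTerm]
        ring
    _ ≤ ∑ i ∈ s, klTerm (x i) (y i) :=
        sum_le_sum fun i hi => le_klTerm (hx i hi) (hy i hi) (hxy i hi) (by positivity)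

section Joint

variable {α β α' β' : Type*} [Fintype α] [Fintype β]

lemma jointMI_eq_sum_klTerm {j : α → β → ℝ} (hj : ∀ a b, 0 ≤ j a b) :
    jointMI j = ∑ a, ∑ b, klTerm (j a b) ((∑ b', j a b') * ∑ a', j a' b) := by
  have hterm : ∀ a b, klTerm (j a b) ((∑ b', j a b') * ∑ a', j a' b) =
      -negMulLog (j a b) - j a b * log (∑ b', j a b') - j a b * log (∑ a', j a' b) := by
    intro a b
    rw [klTerm_mul_of_le (hj a b) (single_le_sum (fun b' _ => hj a b') (mem_univ b))
      (single_le_sum (fun a' _ => hj a' b) (mem_univ a)), negMulLog]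
    ring
  simp only [hterm, sum_sub_distrib, ← sum_mul, sum_neg_distrib]
  rw [sum_comm (f := fun a b => j a b * log (∑ a', j a' b))]
  simp only [← sum_mul, jointMI, negMulLog, neg_mul, sum_neg_distrib]
  ring

variable [DecidableEq α'] [DecidableEq β']

def jointMap (f : α → α') (g : β → β') (j : α → β → ℝ) (a' : α') (b' : β') : ℝ :=
  ∑ a with f a = a', ∑ b with g b = b', j a b

lemma jointMap_nonneg (f : α → α') (g : β → β') {j : α → β → ℝ} (hj : ∀ a b, 0 ≤ j a b)
    (a' : α') (b' : β') : 0 ≤ jointMap f g j a' b' :=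
  sum_nonneg fun a _ => sum_nonneg fun b _ => hj a b

lemma sum_jointMap_mul [Fintype α'] [Fintype β'] (f : α → α') (g : β → β') (j : α → β → ℝ)
    (c : α' → β' → ℝ) :
    ∑ a', ∑ b', jointMap f g j a' b' * c a' b' = ∑ a, ∑ b, j a b * c (f a) (g b) := by
  have hfiber : ∀ a' b', jointMap f g j a' b' * c a' b' =
      ∑ a with f a = a', ∑ b with g b = b', j a b * c (f a) (g b) := by
    intro a' b'
    simp only [jointMap, sum_mul]
    refine sum_congr rfl fun a ha => sum_congr rfl fun b hb => ?_
    rw [(mem_filter.1 ha).2, (mem_filter.1 hb).2]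
  calc _ = ∑ a', ∑ a with f a = a', ∑ b', ∑ b with g b = b', j a b * c (f a) (g b) :=
        sum_congr rfl fun a' _ => by simp only [hfiber]; exact sum_comm
    _ = _ := by simp only [sum_fiberwise]

lemma sum_jointMap_left [Fintype β'] (f : α → α') (g : β → β') (j : α → β → ℝ) (a' : α') :
    ∑ b', jointMap f g j a' b' = ∑ a with f a = a', ∑ b, j a b := by
  simp only [jointMap]
  rw [sum_comm]
  exact sum_congr rfl fun a _ => sum_fiberwise _ _ _

lemma sum_jointMap_right [Fintype α'] (f : α → α') (g : β → β') (j : α → β → ℝ) (b' : β') :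
    ∑ a', jointMap f g j a' b' = ∑ b with g b = b', ∑ a, j a b := by
  simp only [jointMap]
  rw [sum_fiberwise, sum_comm]

theorem jointMI_jointMap_le [Fintype α'] [Fintype β'] (f : α → α') (g : β → β')
    {j : α → β → ℝ} (hj : ∀ a b, 0 ≤ j a b) :
    jointMI (jointMap f g j) ≤ jointMI j := by
  set T := fun a b => klTerm (j a b) ((∑ b', j a b') * ∑ a', j a' b)
  have hfiber : ∀ a' b', klTerm (jointMap f g j a' b')
      ((∑ b'', jointMap f g j a' b'') * ∑ a'', jointMap f g j a'' b') ≤ jointMap f g T a' b' := by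
    intro a' b'
    rw [sum_jointMap_left, sum_jointMap_right, sum_mul_sum]
    simp only [jointMap, T, ← sum_product']
    refine klTerm_sum_le_sum_klTerm _ (fun ab _ => hj ab.1 ab.2)
      (fun ab _ => mul_nonneg (sum_nonneg fun _ _ => hj _ _) (sum_nonneg fun _ _ => hj _ _))
      (fun ab _ hzero => ?_)
    have hrow := single_le_sum (fun b _ => hj ab.1 b) (mem_univ ab.2)
    have hcol := single_le_sum (fun a _ => hj a ab.2) (mem_univ ab.1)
    rcases mul_eq_zero.1 hzero with h | h <;> linarith [hj ab.1 ab.2]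
  calc jointMI (jointMap f g j)
      = ∑ a', ∑ b', klTerm (jointMap f g j a' b')
          ((∑ b'', jointMap f g j a' b'') * ∑ a'', jointMap f g j a'' b') :=
        jointMI_eq_sum_klTerm (jointMap_nonneg f g hj)
    _ ≤ ∑ a', ∑ b', jointMap f g T a' b' :=
        sum_le_sum fun a' _ => sum_le_sum fun b' _ => hfiber a' b'
    _ = ∑ a, ∑ b, T a b := by simpa using sum_jointMap_mul f g T fun _ _ => 1
    _ = jointMI j := (jointMI_eq_sum_klTerm hj).symm

omit [DecidableEq α'] [DecidableEq β'] in
lemma jointMI_nonneg {j : α → β → ℝ} (hj : ∀ a b, 0 ≤ j a b)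
    (hsum : ∑ a, ∑ b, j a b = 1) : 0 ≤ jointMI j := by
  -- collapsing both coordinates to a point leaves mutual information `negMulLog 1 = 0`
  simpa [jointMI, jointMap, hsum] using jointMI_jointMap_le (fun _ : α => ()) (fun _ : β => ()) hj

end Joint

lemma IsDist.nonempty {α : Type*} [Fintype α] {p : α → ℝ} (hp : IsDist p) : Nonempty α :=
  univ_nonempty_iff.1 (nonempty_of_sum_ne_zero (hp.2 ▸ one_ne_zero))

lemma IsDist.map {α β : Type*} [Fintype α] [Fintype β] [DecidableEq β] {p : α → ℝ}
    (hp : IsDist p) (g : α → β) : IsDist fun b => ∑ a with g a = b, p a :=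
  ⟨fun _ => sum_nonneg fun a _ => hp.1 a, (sum_fiberwise _ _ _).trans hp.2⟩

lemma jointMI_mul_nonneg_of_isKernel {α β : Type*} [Fintype α] [Fintype β] {p : α → ℝ}
    {k : α → β → ℝ} (hp : IsDist p) (hk : IsKernel k) : 0 ≤ jointMI fun a b => p a * k a b :=
  jointMI_nonneg (fun a b => mul_nonneg (hp.1 a) (hk.1 a b)) (by simp [← mul_sum, hk.2, hp.2])

lemma exists_isKernel_mul_eq {α β : Type*} [Fintype β] [Nonempty β] {j : α → β → ℝ}
    (hj : ∀ a b, 0 ≤ j a b) : ∃ k, IsKernel k ∧ ∀ a b, (∑ b', j a b') * k a b = j a b := by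
  refine ⟨fun a b => if ∑ b', j a b' = 0 then (Fintype.card β : ℝ)⁻¹ else j a b / ∑ b', j a b',
    ⟨fun a b => ?_, fun a => ?_⟩, fun a b => ?_⟩
  · dsimp only
    split_ifs
    · positivity
    · exact div_nonneg (hj a b) (sum_nonneg fun b' _ => hj a b')
  · dsimp only
    split_ifs with h
    · simp [Fintype.card_ne_zero]
    · rw [← sum_div, div_self h]
  · dsimp only
    split_ifs with h
    · rw [h, zero_mul, (sum_eq_zero_iff_of_nonneg fun b' _ => hj a b').1 h b (mem_univ b)]
    · field_simp

theorem rate_distortion_comparison_general {A B C : Type*}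
    [Fintype A] [Fintype B] [DecidableEq B]
    (p : A → ℝ) (hp : IsDist p)
    (g : A → B) (h : B → C) (d : C → C → ℝ)
    (D : ℝ)
    -- the distribution of `Y = g(X)` induced by `p` through `g`
    (q : B → ℝ) (hq : ∀ b, q b = ∑ a : A, if g a = b then p a else 0)
    -- the sets of achievable rates for quantizing `X` and `Y` at distortion `D`
    (SX SY : Set ℝ)
    (hSX : SX = {r | ∃ k : A → A → ℝ, IsKernel k ∧
      (∑ x : A, ∑ x' : A, p x * k x x' * d (h (g x)) (h (g x'))) ≤ D ∧
      r = jointMI (fun x x' => p x * k x x')})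
    (hSY : SY = {r | ∃ k : B → B → ℝ, IsKernel k ∧
      (∑ y : B, ∑ y' : B, q y * k y y' * d (h y) (h y')) ≤ D ∧
      r = jointMI (fun y y' => q y * k y y')})
    (hX : SX.Nonempty) :
    sInf SY ≤ sInf SX := by
  have hq_fiber : q = fun b => ∑ a with g a = b, p a := funext fun b => by rw [hq, sum_filter]
  have : Nonempty B := hp.nonempty.map g
  have hbdd : BddBelow SY := by
    refine ⟨0, ?_⟩
    rw [hSY]
    rintro _ ⟨k, hk, -, rfl⟩
    exact jointMI_mul_nonneg_of_isKernel (hq_fiber ▸ hp.map g) hk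
  subst hSX
  refine le_csInf hX ?_
  rintro _ ⟨k, hk, hdist, rfl⟩
  have hj : ∀ x x', 0 ≤ p x * k x x' := fun x x' => mul_nonneg (hp.1 x) (hk.1 x x')
  obtain ⟨k', hk', hJ⟩ := exists_isKernel_mul_eq (jointMap_nonneg g g hj)
  set J := jointMap g g fun x x' => p x * k x x'
  have hrow : ∀ y, ∑ y', J y y' = q y := fun y => by
    simp only [J, sum_jointMap_left, ← mul_sum, hk.2, mul_one, hq_fiber]
  simp only [hrow] at hJ
  have hmem : jointMI J ∈ SY := by
    rw [hSY]
    refine ⟨k', hk', ?_, by simp only [hJ]⟩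
    simpa only [hJ, J, sum_jointMap_mul] using hdist
  exact (csInf_le hbdd hmem).trans (jointMI_jointMap_le g g hj)

theorem rate_distortion_comparison {A B C : Type*}
    [Fintype A] [Fintype B] [Fintype C] [DecidableEq B]
    (p : A → ℝ) (hp : IsDist p)
    (g : A → B) (h : B → C) (d : C → C → ℝ) (hd : ∀ c c', 0 ≤ d c c')
    (D : ℝ) (hD : 0 ≤ D)
    -- the distribution of `Y = g(X)` induced by `p` through `g`
    (q : B → ℝ) (hq : ∀ b, q b = ∑ a : A, if g a = b then p a else 0)
    -- the sets of achievable rates for quantizing `X` and `Y` at distortion `D`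
    (SX SY : Set ℝ)
    (hSX : SX = {r | ∃ k : A → A → ℝ, IsKernel k ∧
      (∑ x : A, ∑ x' : A, p x * k x x' * d (h (g x)) (h (g x'))) ≤ D ∧
      r = jointMI (fun x x' => p x * k x x')})
    (hSY : SY = {r | ∃ k : B → B → ℝ, IsKernel k ∧
      (∑ y : B, ∑ y' : B, q y * k y y' * d (h y) (h y')) ≤ D ∧
      r = jointMI (fun y y' => q y * k y y')})
    (hX : SX.Nonempty) (hY : SY.Nonempty) :
    sInf SY ≤ sInf SX :=
  rate_distortion_comparison_general p hp g h d D q hq SX SY hSX hSY hX
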